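/- arXiv:2506.01075 — 2 statements merged into one kernel-verified Lean document; each statement's English description precedes it below -/
import Mathlib

section
/- Let D be a Bayesian network distribution on {0,1}^n whose DAG is topologically ordered by the identity ordering (every node's parents have smaller index), let f : {0,1}^n → ℝ, let 0 ≤ k ≤ n, and let α ⊆ {n−k+1,…,n}. Define g_α : {0,1}^{n−k} → ℝ by g_α(u) = Σ_{β ⊆ {1,…,n−k}} f̂_{β∪α} φ_β(x), where x is any point of {0,1}^n whose first n−k coordinates equal u (φ_β depends only on these coordinates by the ordering assumption). Then for every u ∈ {0,1}^{n−k}, g_α(u) = E[f(u,Y) φ_α(u,Y)], where Y is distributed as the last k coordinates of X ∼ D conditioned on the first n−k coordinates of X equaling u. -/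
/-!
A Bayesian network (BN) distribution on {0,1}^n: a DAG on [n] (encoded by parent
sets together with a rank function witnessing acyclicity) and, for each node `v`,
a conditional probability `cond v x ∈ (0,1)` of `X_v = 1` given the parent values,
depending only on the coordinates in `pa v`.  The joint distribution is
`prob x = ∏ v, P(x_v | x_{pa v})`, and the BN-induced basis functions are
`φ_v(x) = (x_v − μ_{v,x_pa(v)})/σ_{v,x_pa(v)}`, `φ_S = ∏_{v∈S} φ_v`.
-/

open Finset

noncomputable section

/-- Interpret a Boolean as a real number (`true ↦ 1`, `false ↦ 0`). -/
def b2r (b : Bool) : ℝ := if b then 1 else 0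

/-- A Bayesian network distribution on `{0,1}^n`. -/
structure BayesNet (n : ℕ) where
  /-- parent set of each node -/
  pa : Fin n → Finset (Fin n)
  /-- the parent relation is acyclic (a DAG) -/
  acyclic : ∃ rank : Fin n → ℕ, ∀ v u, u ∈ pa v → rank u < rank v
  /-- `cond v x = P(X_v = 1 | X_{pa v} = x_{pa v})` -/
  cond : Fin n → (Fin n → Bool) → ℝ
  /-- the conditional probability of `v` depends only on the parents of `v` -/
  cond_local : ∀ v x y, (∀ u ∈ pa v, x u = y u) → cond v x = cond v y
  cond_pos : ∀ v x, 0 < cond v x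
  cond_lt_one : ∀ v x, cond v x < 1

namespace BayesNet

variable {n : ℕ}

/-- The joint probability mass function `D(x) = ∏_v P(x_v | x_{pa v})`. -/
def prob (B : BayesNet n) (x : Fin n → Bool) : ℝ :=
  ∏ v, if x v then B.cond v x else 1 - B.cond v x

/-- Conditional standard deviation `σ_{v, x_{pa v}}`. -/
def sigma (B : BayesNet n) (v : Fin n) (x : Fin n → Bool) : ℝ :=
  Real.sqrt (B.cond v x * (1 - B.cond v x))

/-- BN-induced basis function of a single node. -/
def phi (B : BayesNet n) (v : Fin n) (x : Fin n → Bool) : ℝ :=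
  (b2r (x v) - B.cond v x) / B.sigma v x

/-- BN-induced basis function `φ_S = ∏_{v ∈ S} φ_v` (with `φ_∅ ≡ 1`). -/
def phiS (B : BayesNet n) (S : Finset (Fin n)) (x : Fin n → Bool) : ℝ :=
  ∏ v ∈ S, B.phi v x

/-- Expectation with respect to the BN distribution. -/
def expect (B : BayesNet n) (g : (Fin n → Bool) → ℝ) : ℝ :=
  ∑ x, B.prob x * g x

/-- Fourier coefficient `f̂_S = E_D[f(X) φ_S(X)]`. -/
def coeff (B : BayesNet n) (f : (Fin n → Bool) → ℝ) (S : Finset (Fin n)) : ℝ :=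
  B.expect fun x => f x * B.phiS S x

/-- Conditional expectation `E[g(X) | X_u = y_u for all u ∈ A]`. -/
def condExp (B : BayesNet n) (g : (Fin n → Bool) → ℝ) (A : Finset (Fin n))
    (y : Fin n → Bool) : ℝ :=
  (∑ x ∈ univ.filter (fun x : Fin n → Bool => ∀ u ∈ A, x u = y u), B.prob x * g x) /
  (∑ x ∈ univ.filter (fun x : Fin n → Bool => ∀ u ∈ A, x u = y u), B.prob x)

/-- The union of the parent sets of the nodes of `S`. -/
def paS (B : BayesNet n) (S : Finset (Fin n)) : Finset (Fin n) := S.biUnion B.pa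

/-- Spectral norm `L1(f) = Σ_S |f̂_S|`. -/
def L1 (B : BayesNet n) (f : (Fin n → Bool) → ℝ) : ℝ :=
  ∑ S : Finset (Fin n), |B.coeff f S|

end BayesNet

/-!
Expanding the coefficients, `∑_{β ⊆ A} f̂_{β ∪ α} φ_β(u) = E[f φ_α ∏_{v ∈ A} (1 + φ_v(X) φ_v(u))]`
for `A` the first `n − k` nodes. This product is a reproducing kernel on the ancestral set `A`:
at a minimal node where `X` and `u` disagree, `φ_v(X)` and `φ_v(u)` share `μ` and `σ` and multiply
to `−1`, so the product vanishes off the fiber `X_A = u_A`; on the fiber it equals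
`1 / P(X_A = u_A)` because `1 + φ_v² = 1 / P(x_v | x_{pa v})`. Summing out the factors outside `A`
in decreasing topological order shows that `P(X_A = u_A) = ∏_{v ∈ A} P(u_v | u_{pa v})`.
-/

open Function

section Fiber

variable {ι β : Type*} [Fintype ι] [DecidableEq ι] [Fintype β] [DecidableEq β]

def fiber (A : Finset ι) (u : ι → β) : Finset (ι → β) :=
  univ.filter fun x => ∀ i ∈ A, x i = u i

theorem mem_fiber {A : Finset ι} {u x : ι → β} : x ∈ fiber A u ↔ ∀ i ∈ A, x i = u i := by
  simp [fiber]

theorem sum_fiber_eq_sum_fiber_insert {M : Type*} [AddCommMonoid M] {A : Finset ι} {w : ι}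
    (hw : w ∉ A) (u : ι → β) (F : (ι → β) → M) :
    ∑ x ∈ fiber A u, F x = ∑ y ∈ fiber (insert w A) u, ∑ b, F (update y w b) := by
  rw [← sum_product']
  symm
  refine sum_nbij' (fun p => update p.1 w p.2) (fun x => (update x w (u w), x w))
    ?_ ?_ ?_ ?_ fun _ _ => rfl
  · rintro ⟨y, b⟩ hy
    simp only [mem_product, mem_fiber, mem_insert] at hy ⊢
    intro i hi
    rw [update_of_ne (ne_of_mem_of_not_mem hi hw), hy.1 i (Or.inr hi)]
  · intro x hx
    simp only [mem_product, mem_fiber, mem_insert] at hx ⊢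
    refine ⟨fun i hi => ?_, mem_univ _⟩
    rcases hi with rfl | hi
    · exact update_self ..
    · rw [update_of_ne (ne_of_mem_of_not_mem hi hw), hx i hi]
  · rintro ⟨y, b⟩ hy
    simp only [mem_product, mem_fiber, mem_insert] at hy
    simp [update_idem, ← hy.1 w (Or.inl rfl)]
  · intro x _
    simp [update_idem]

end Fiber

namespace BayesNet

variable {n : ℕ} (B : BayesNet n)

def condProb (v : Fin n) (x : Fin n → Bool) : ℝ :=
  if x v then B.cond v x else 1 - B.cond v x

def IsAncestral (A : Finset (Fin n)) : Prop :=
  ∀ v ∈ A, B.pa v ⊆ A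

theorem condProb_pos (v : Fin n) (x : Fin n → Bool) : 0 < B.condProb v x := by
  unfold condProb
  split
  · exact B.cond_pos v x
  · linarith [B.cond_lt_one v x]

theorem prob_eq_prod_condProb (x : Fin n → Bool) : B.prob x = ∏ v, B.condProb v x := rfl

theorem notMem_pa_self (v : Fin n) : v ∉ B.pa v := by
  obtain ⟨rank, hrank⟩ := B.acyclic
  exact fun hv => lt_irrefl _ (hrank v v hv)

theorem condProb_congr {v : Fin n} {x y : Fin n → Bool} (hv : x v = y v)
    (h : ∀ w ∈ B.pa v, x w = y w) : B.condProb v x = B.condProb v y := by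
  simp only [condProb, hv, B.cond_local v x y h]

theorem phi_congr {v : Fin n} {x y : Fin n → Bool} (hv : x v = y v)
    (h : ∀ w ∈ B.pa v, x w = y w) : B.phi v x = B.phi v y := by
  simp only [phi, sigma, hv, B.cond_local v x y h]

theorem condProb_update_of_notMem {v w : Fin n} (hwv : w ≠ v) (hw : w ∉ B.pa v)
    (x : Fin n → Bool) (b : Bool) : B.condProb v (update x w b) = B.condProb v x :=
  B.condProb_congr (update_of_ne hwv.symm ..) fun _ hu =>
    update_of_ne (ne_of_mem_of_not_mem hu hw) ..

theorem sum_condProb_update_self (v : Fin n) (x : Fin n → Bool) :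
    ∑ b, B.condProb v (update x v b) = 1 := by
  have hc : B.cond v (update x v true) = B.cond v (update x v false) :=
    B.cond_local _ _ _ fun w hw => by
      simp only [update_of_ne (ne_of_mem_of_not_mem hw (B.notMem_pa_self v))]
  simp [condProb, hc]

theorem sigma_sq (v : Fin n) (x : Fin n → Bool) :
    B.sigma v x ^ 2 = B.cond v x * (1 - B.cond v x) :=
  Real.sq_sqrt (mul_nonneg (B.cond_pos v x).le (by linarith [B.cond_lt_one v x]))

theorem one_add_phi_mul_self (v : Fin n) (x : Fin n → Bool) :
    1 + B.phi v x * B.phi v x = (B.condProb v x)⁻¹ := by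
  have hc0 := (B.cond_pos v x).ne'
  have hc1 : 1 - B.cond v x ≠ 0 := by linarith [B.cond_lt_one v x]
  rw [phi, div_mul_div_comm, ← sq, ← sq, sigma_sq, condProb]
  cases x v <;> simp only [b2r, Bool.false_eq_true, if_true, if_false] <;> field_simp <;> ring

theorem phi_mul_phi_eq_neg_one {v : Fin n} {x y : Fin n → Bool}
    (hc : B.cond v x = B.cond v y) (hne : x v ≠ y v) : B.phi v x * B.phi v y = -1 := by
  have hc0 := (B.cond_pos v y).ne'
  have hc1 : 1 - B.cond v y ≠ 0 := by linarith [B.cond_lt_one v y]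
  have hσ : B.sigma v x = B.sigma v y := by rw [sigma, sigma, hc]
  rw [phi, phi, hσ, hc, div_mul_div_comm, ← sq, sigma_sq]
  cases hx : x v <;> cases hy : y v <;> simp only [hx, hy, ne_eq, not_true_eq_false] at hne ⊢ <;>
    simp only [b2r, Bool.false_eq_true, if_true, if_false] <;> field_simp <;> ring

theorem condExp_eq_div (g : (Fin n → Bool) → ℝ) (A : Finset (Fin n)) (y : Fin n → Bool) :
    B.condExp g A y = (∑ x ∈ fiber A y, B.prob x * g x) / ∑ x ∈ fiber A y, B.prob x := by
  -- The two filters differ only in their decidability instances, so this is not `rfl`.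
  unfold condExp fiber
  congr!

theorem sum_fiber_compl_prod_condProb (C : Finset (Fin n)) (u : Fin n → Bool) :
    ∑ x ∈ fiber Cᶜ u, ∏ v ∈ C, B.condProb v x = 1 := by
  obtain ⟨rank, hrank⟩ := B.acyclic
  induction C using induction_on_max_value rank generalizing u with
  | empty =>
    have hfiber : fiber univ u = {u} := by
      ext x
      simp [mem_fiber, funext_iff]
    simp only [compl_empty, prod_empty, hfiber, sum_singleton]
  | insert a s ha hmax ih =>
    have hcompl : insert a (insert a s)ᶜ = sᶜ := by
      ext v
      by_cases hv : v = a <;> simp [hv, ha]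
    rw [sum_fiber_eq_sum_fiber_insert (A := (insert a s)ᶜ) (w := a) (by simp) u, hcompl, ← ih u]
    refine sum_congr rfl fun y _ => ?_
    -- `a` has maximal rank in `insert a s`, so it is a parent of no node of `s`.
    have hs : ∀ b, ∏ v ∈ s, B.condProb v (update y a b) = ∏ v ∈ s, B.condProb v y :=
      fun b => prod_congr rfl fun v hv =>
        B.condProb_update_of_notMem (ne_of_mem_of_not_mem hv ha).symm
          (fun h => (hmax v hv).not_gt (hrank v a h)) y b
    simp_rw [prod_insert ha, hs, ← sum_mul, sum_condProb_update_self, one_mul]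

theorem prod_one_add_phi_mul_phi {A : Finset (Fin n)} (hA : B.IsAncestral A)
    (x u : Fin n → Bool) :
    ∏ v ∈ A, (1 + B.phi v x * B.phi v u) =
      if x ∈ fiber A u then (∏ v ∈ A, B.condProb v u)⁻¹ else 0 := by
  split_ifs with hx
  · rw [mem_fiber] at hx
    rw [← prod_inv_distrib]
    refine prod_congr rfl fun v hv => ?_
    rw [B.phi_congr (hx v hv) fun w hw => hx w (hA v hv hw), one_add_phi_mul_self]
  · obtain ⟨rank, hrank⟩ := B.acyclic
    have hdisagree : (A.filter fun v => x v ≠ u v).Nonempty := by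
      simpa [mem_fiber, Finset.Nonempty] using hx
    obtain ⟨v, hv, hmin⟩ := exists_min_image _ rank hdisagree
    rw [mem_filter] at hv
    have hc : B.cond v x = B.cond v u := B.cond_local _ _ _ fun w hw => by
      by_contra hne
      exact (hmin w (mem_filter.2 ⟨hA v hv.1 hw, hne⟩)).not_gt (hrank v w hw)
    exact prod_eq_zero hv.1 (by rw [B.phi_mul_phi_eq_neg_one hc hv.2]; ring)

theorem sum_fiber_prob {A : Finset (Fin n)} (hA : B.IsAncestral A) (u : Fin n → Bool) :
    ∑ x ∈ fiber A u, B.prob x = ∏ v ∈ A, B.condProb v u := by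
  have hprob : ∀ x ∈ fiber A u,
      B.prob x = (∏ v ∈ A, B.condProb v u) * ∏ v ∈ Aᶜ, B.condProb v x := by
    intro x hx
    rw [mem_fiber] at hx
    rw [prob_eq_prod_condProb, ← prod_mul_prod_compl A]
    congr 1
    exact prod_congr rfl fun v hv => B.condProb_congr (hx v hv) fun w hw => hx w (hA v hv hw)
  have hmarg := B.sum_fiber_compl_prod_condProb Aᶜ u
  rw [compl_compl] at hmarg
  rw [sum_congr rfl hprob, ← mul_sum, hmarg, mul_one]

theorem sum_powerset_coeff_mul_phiS {A α : Finset (Fin n)} (hαA : Disjoint A α)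
    (f : (Fin n → Bool) → ℝ) (u : Fin n → Bool) :
    ∑ β ∈ A.powerset, B.coeff f (β ∪ α) * B.phiS β u =
      ∑ x, B.prob x * (f x * B.phiS α x) * ∏ v ∈ A, (1 + B.phi v x * B.phi v u) := by
  simp_rw [prod_one_add, mul_sum, coeff, expect, sum_mul]
  rw [sum_comm]
  refine sum_congr rfl fun x _ => sum_congr rfl fun β hβ => ?_
  rw [phiS, phiS, prod_union (disjoint_of_subset_left (mem_powerset.1 hβ) hαA),
    prod_mul_distrib, phiS]
  ring

theorem sum_powerset_coeff_mul_phiS_eq_condExp {A α : Finset (Fin n)} (hA : B.IsAncestral A)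
    (hαA : Disjoint A α) (f : (Fin n → Bool) → ℝ) (u : Fin n → Bool) :
    ∑ β ∈ A.powerset, B.coeff f (β ∪ α) * B.phiS β u =
      B.condExp (fun x => f x * B.phiS α x) A u := by
  rw [condExp_eq_div]
  simp_rw [sum_powerset_coeff_mul_phiS B hαA, prod_one_add_phi_mul_phi B hA, mul_ite, mul_zero,
    sum_ite_mem, univ_inter, sum_fiber_prob B hA, div_eq_mul_inv, sum_mul]

end BayesNet

theorem bn_km_partial_spectrum_general {n : ℕ} (B : BayesNet n)
    (hord : ∀ v u, u ∈ B.pa v → u < v)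
    (f : (Fin n → Bool) → ℝ) (k : ℕ)
    (α : Finset (Fin n)) (hα : ∀ i ∈ α, n - k ≤ (i : ℕ))
    (u : Fin n → Bool) :
    (∑ β ∈ univ.filter (fun β : Finset (Fin n) => ∀ i ∈ β, (i : ℕ) < n - k),
        B.coeff f (β ∪ α) * B.phiS β u)
      = B.condExp (fun x => f x * B.phiS α x)
          (univ.filter (fun i : Fin n => (i : ℕ) < n - k)) u := by
  set A := univ.filter fun i : Fin n => (i : ℕ) < n - k
  have hA : B.IsAncestral A := fun v hv w hw => by
    simp only [A, mem_filter, mem_univ, true_and] at hv ⊢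
    exact lt_trans (hord v w hw) hv
  have hαA : Disjoint A α := disjoint_left.2 fun i hiA hiα => by
    simp only [A, mem_filter, mem_univ, true_and] at hiA
    have := hα i hiα
    omega
  have hpowerset : univ.filter (fun β : Finset (Fin n) => ∀ i ∈ β, (i : ℕ) < n - k) =
      A.powerset := by
    ext β
    simp [A, subset_iff]
  rw [hpowerset]
  exact B.sum_powerset_coeff_mul_phiS_eq_condExp hA hαA f u

/-- cf. Lemma 3.2 of Kushilevitz–Mansour, generalized. Assume the
DAG is topologically ordered by the identity ordering (parents have smaller index).
Let `0 ≤ k ≤ n` and let `α` be a set of indices among the last `k` coordinates.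
Then for every `u`, the partial-spectrum function
`g_α(u) = Σ_{β ⊆ first n−k coords} f̂_{β∪α} φ_β(u)` equals the conditional
expectation `E[f(uY) φ_α(uY)]`, where `Y` is the last `k` coordinates of `X ∼ D`
conditioned on the first `n−k` coordinates equaling `u`. -/
theorem bn_km_partial_spectrum {n : ℕ} (B : BayesNet n)
    (hord : ∀ v u, u ∈ B.pa v → u < v)
    (f : (Fin n → Bool) → ℝ) (k : ℕ) (hk : k ≤ n)
    (α : Finset (Fin n)) (hα : ∀ i ∈ α, n - k ≤ (i : ℕ))
    (u : Fin n → Bool) :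
    (∑ β ∈ univ.filter (fun β : Finset (Fin n) => ∀ i ∈ β, (i : ℕ) < n - k),
        B.coeff f (β ∪ α) * B.phiS β u)
      = B.condExp (fun x => f x * B.phiS α x)
          (univ.filter (fun i : Fin n => (i : ℕ) < n - k)) u :=
  bn_km_partial_spectrum_general B hord f k α hα u
end
end

section
/- Let D be a chain BN on {0,1}^n and let f be a conjunction with literal set T = T0 ∪ T1. For any subset S ⊆ [n] with max S > max T, the Fourier coefficient f̂_S equals 0. -/
/-!
A chain BN on `{0,1}^n` is a Bayesian network whose DAG is the directed path
`1 → 2 → ⋯ → n` (here indexed by `Fin n`, node `0` being the root): node `0` has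
no parent and the parent of node `i > 0` is node `i−1`.  `cond i b` is
`P(X_i = 1 | X_{i−1} = b)` (for the root both values coincide and give its
unconditional mean).  The joint distribution is the product of the conditionals,
and the BN-induced Fourier basis is `φ_i(x) = (x_i − μ_{i,x_{i−1}})/σ_{i,x_{i−1}}`,
`φ_S = ∏_{i∈S} φ_i`, with spectral norm `L1(f) = Σ_S |f̂_S|`.
-/

open Finset

noncomputable section

/-- A chain Bayesian network distribution on `{0,1}^n`. -/
structure ChainBN (n : ℕ) where
  /-- `cond i b = P(X_i = 1 | X_{i-1} = b)`; for the root `i = 0` it is its mean. -/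
  cond : Fin n → Bool → ℝ
  cond_pos : ∀ i b, 0 < cond i b
  cond_lt_one : ∀ i b, cond i b < 1
  /-- the root has no parent, so its "conditional" is constant -/
  root_const : ∀ (h : 0 < n) (b b' : Bool), cond ⟨0, h⟩ b = cond ⟨0, h⟩ b'

namespace ChainBN

variable {n : ℕ}

/-- The value of the parent of node `i` under assignment `x` (root: dummy value). -/
def parentVal (x : Fin n → Bool) (i : Fin n) : Bool :=
  if (i : ℕ) = 0 then false
  else x ⟨(i : ℕ) - 1, Nat.lt_of_le_of_lt (Nat.sub_le _ _) i.isLt⟩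

/-- The joint probability mass function of the chain. -/
def prob (B : ChainBN n) (x : Fin n → Bool) : ℝ :=
  ∏ i, if x i then B.cond i (parentVal x i) else 1 - B.cond i (parentVal x i)

/-- Conditional standard deviation `σ_{i,b} = √(μ_{i,b}(1−μ_{i,b}))`. -/
def sigma (B : ChainBN n) (i : Fin n) (b : Bool) : ℝ :=
  Real.sqrt (B.cond i b * (1 - B.cond i b))

/-- BN-induced basis function of a single node. -/
def phi (B : ChainBN n) (i : Fin n) (x : Fin n → Bool) : ℝ :=
  (b2r (x i) - B.cond i (parentVal x i)) / B.sigma i (parentVal x i)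

/-- BN-induced basis function `φ_S = ∏_{i ∈ S} φ_i` (with `φ_∅ ≡ 1`). -/
def phiS (B : ChainBN n) (S : Finset (Fin n)) (x : Fin n → Bool) : ℝ :=
  ∏ i ∈ S, B.phi i x

/-- Expectation with respect to the chain distribution. -/
def expect (B : ChainBN n) (g : (Fin n → Bool) → ℝ) : ℝ :=
  ∑ x, B.prob x * g x

/-- Fourier coefficient `f̂_S = E_D[f(X) φ_S(X)]`. -/
def coeff (B : ChainBN n) (f : (Fin n → Bool) → ℝ) (S : Finset (Fin n)) : ℝ :=
  B.expect fun x => f x * B.phiS S x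

/-- Spectral norm `L1(f) = Σ_S |f̂_S|`. -/
def L1 (B : ChainBN n) (f : (Fin n → Bool) → ℝ) : ℝ :=
  ∑ S : Finset (Fin n), |B.coeff f S|

end ChainBN

/-- The conjunction `∏_{i∈T1} x_i · ∏_{j∈T0} (1−x_j)` on `{0,1}^n`. -/
def conj {n : ℕ} (T0 T1 : Finset (Fin n)) (x : Fin n → Bool) : ℝ :=
  (∏ i ∈ T1, b2r (x i)) * ∏ j ∈ T0, (1 - b2r (x j))

/-!
Let `m = max S`, so `φ_S = φ_m · φ_{S∖{m}}`, and every literal of the conjunction and every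
other factor of `φ_S` only reads coordinates below `m`. Summing the joint mass over the nodes
`n-1, n-2, …, m+1` in turn marginalizes them out, because each conditional sums to one over its
own node. What remains is `E[φ_m · H]` with `H` depending only on `X_{<m}`, and summing over
`x_m` gives zero since `φ_m` has conditional mean zero given `X_{m-1}`.
-/

section Flip

variable {ι : Type*} [DecidableEq ι]

def flipAt (k : ι) (x : ι → Bool) : ι → Bool :=
  Function.update x k (!x k)

theorem flipAt_of_ne {k j : ι} (h : j ≠ k) (x : ι → Bool) : flipAt k x j = x j :=
  Function.update_of_ne h _ x

theorem flipAt_self (k : ι) (x : ι → Bool) : flipAt k x k = !x k :=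
  Function.update_self k _ x

theorem flipAt_involutive (k : ι) : Function.Involutive (flipAt k) := by
  intro x
  simp [flipAt]

theorem DependsOn.apply_flipAt {β : Type*} {G : (ι → Bool) → β} {s : Set ι}
    (hG : DependsOn G s) {k : ι} (hk : k ∉ s) (x : ι → Bool) : G (flipAt k x) = G x :=
  hG fun _ hi => flipAt_of_ne (ne_of_mem_of_not_mem hi hk) x

variable [Fintype ι]

theorem sum_comp_flipAt {M : Type*} [AddCommMonoid M] (k : ι) (F : (ι → Bool) → M) :
    ∑ x, F (flipAt k x) = ∑ x, F x :=
  Equiv.sum_comp (flipAt_involutive k).toPerm F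

theorem two_mul_sum_mul_of_flipAt_invariant {R : Type*} [Semiring R] (k : ι)
    (a Q : (ι → Bool) → R) (hQ : ∀ x, Q (flipAt k x) = Q x) :
    2 * ∑ x, a x * Q x = ∑ x, (a x + a (flipAt k x)) * Q x := by
  have hflip : ∑ x, a (flipAt k x) * Q x = ∑ x, a x * Q x := by
    simpa only [flipAt_involutive k _, hQ] using
      (sum_comp_flipAt k fun x => a (flipAt k x) * Q x).symm
  simp only [add_mul, sum_add_distrib, hflip, two_mul]

end Flip

theorem DependsOn.mul {ι M : Type*} {α : ι → Type*} [Mul M] {f g : (Π i, α i) → M}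
    {s : Set ι} (hf : DependsOn f s) (hg : DependsOn g s) : DependsOn (fun x => f x * g x) s :=
  fun _ _ h => congr_arg₂ _ (hf h) (hg h)

theorem dependsOn_finset_prod {ι κ M : Type*} {α : ι → Type*} [CommMonoid M]
    {f : κ → (Π i, α i) → M} {s : Set ι} (t : Finset κ) (hf : ∀ j ∈ t, DependsOn (f j) s) :
    DependsOn (fun x => ∏ j ∈ t, f j x) s :=
  fun _ _ h => prod_congr rfl fun j hj => hf j hj h

namespace ChainBN

variable {n : ℕ}

theorem dependsOn_parentVal (i : Fin n) :
    DependsOn (fun x => parentVal x i) {j | (j : ℕ) < i} := by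
  intro x y h
  unfold parentVal
  split_ifs with hi
  · rfl
  · exact h _ (by simp only [Set.mem_ofPred_eq]; omega)

theorem dependsOn_of_node_and_parent {β : Type*} (i : Fin n) (F : Bool → Bool → β) :
    DependsOn (fun x => F (x i) (parentVal x i)) {j | (j : ℕ) < i + 1} := by
  intro x y h
  dsimp only
  rw [h i (by simp)]
  exact congrArg _ (dependsOn_parentVal i fun j hj => h j (by simp at hj ⊢; omega))

def factor (B : ChainBN n) (i : Fin n) (x : Fin n → Bool) : ℝ :=
  if x i then B.cond i (parentVal x i) else 1 - B.cond i (parentVal x i)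

theorem dependsOn_factor (B : ChainBN n) (i : Fin n) :
    DependsOn (B.factor i) {j | (j : ℕ) < i + 1} :=
  dependsOn_of_node_and_parent i fun b p => if b then B.cond i p else 1 - B.cond i p

theorem dependsOn_phi (B : ChainBN n) (i : Fin n) :
    DependsOn (B.phi i) {j | (j : ℕ) < i + 1} :=
  dependsOn_of_node_and_parent i fun b p => (b2r b - B.cond i p) / B.sigma i p

theorem dependsOn_phiS (B : ChainBN n) {S : Finset (Fin n)} {k : ℕ}
    (hS : ∀ i ∈ S, (i : ℕ) < k) : DependsOn (B.phiS S) {j | (j : ℕ) < k} :=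
  dependsOn_finset_prod S fun i hi =>
    (B.dependsOn_phi i).mono fun j hj => by simp only [Set.mem_ofPred_eq] at hj ⊢; grind

theorem parentVal_flipAt_self (i : Fin n) (x : Fin n → Bool) :
    parentVal (flipAt i x) i = parentVal x i :=
  (dependsOn_parentVal i).apply_flipAt (by simp) x

theorem factor_add_factor_flipAt (B : ChainBN n) (i : Fin n) (x : Fin n → Bool) :
    B.factor i x + B.factor i (flipAt i x) = 1 := by
  unfold factor
  rw [flipAt_self, parentVal_flipAt_self]
  cases x i <;> simp

/-- `φ_i` has conditional mean zero given the parent of node `i`. -/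
theorem factor_mul_phi_add_flipAt (B : ChainBN n) (i : Fin n) (x : Fin n → Bool) :
    B.factor i x * B.phi i x + B.factor i (flipAt i x) * B.phi i (flipAt i x) = 0 := by
  unfold factor phi
  rw [flipAt_self, parentVal_flipAt_self]
  cases x i <;> simp [b2r] <;> ring

def prefixProb (B : ChainBN n) (k : ℕ) (x : Fin n → Bool) : ℝ :=
  ∏ i ∈ univ.filter (fun i : Fin n => (i : ℕ) < k), B.factor i x

theorem prefixProb_of_le (B : ChainBN n) {k : ℕ} (hk : n ≤ k) : B.prefixProb k = B.prob := by
  funext x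
  rw [prefixProb, filter_true_of_mem fun i _ => lt_of_lt_of_le i.isLt hk]
  rfl

theorem prefixProb_succ (B : ChainBN n) {k : ℕ} (hk : k < n) (x : Fin n → Bool) :
    B.prefixProb (k + 1) x = B.factor ⟨k, hk⟩ x * B.prefixProb k x := by
  have hfilter : univ.filter (fun i : Fin n => (i : ℕ) < k + 1) =
      insert ⟨k, hk⟩ (univ.filter fun i : Fin n => (i : ℕ) < k) := by
    ext i
    simp only [mem_filter, mem_univ, true_and, mem_insert, Fin.ext_iff]
    omega
  rw [prefixProb, hfilter, prod_insert (by simp)]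
  rfl

theorem dependsOn_prefixProb (B : ChainBN n) (k : ℕ) :
    DependsOn (B.prefixProb k) {j | (j : ℕ) < k} :=
  dependsOn_finset_prod _ fun i hi =>
    (B.dependsOn_factor i).mono fun j hj => by simp at hi hj ⊢; omega

/-- The factor `2 ^ (n - k)` counts the assignments of the nodes `k, …, n-1`, which `G` does not
read. -/
theorem sum_prefixProb_mul_of_dependsOn (B : ChainBN n) {k : ℕ} (hk : k ≤ n)
    {G : (Fin n → Bool) → ℝ} (hG : DependsOn G {j | (j : ℕ) < k}) :
    ∑ x, B.prefixProb k x * G x = 2 ^ (n - k) * ∑ x, B.prob x * G x := by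
  induction hk using Nat.decreasingInduction with
  | self => rw [B.prefixProb_of_le le_rfl, Nat.sub_self, pow_zero, one_mul]
  | of_succ k hk ih =>
    have hQ : ∀ x, B.prefixProb k (flipAt ⟨k, hk⟩ x) * G (flipAt ⟨k, hk⟩ x) =
        B.prefixProb k x * G x := fun x => by
      rw [(B.dependsOn_prefixProb k).apply_flipAt (by simp), hG.apply_flipAt (by simp)]
    have h2 := two_mul_sum_mul_of_flipAt_invariant ⟨k, hk⟩ (B.factor ⟨k, hk⟩)
      (fun x => B.prefixProb k x * G x) hQ
    simp only [factor_add_factor_flipAt, one_mul, ← mul_assoc, ← B.prefixProb_succ hk] at h2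
    rw [← h2, ih (hG.mono fun j hj => by simp at hj ⊢; omega), ← mul_assoc, ← pow_succ',
      Nat.sub_add_eq, Nat.sub_add_cancel (Nat.sub_pos_of_lt hk)]

theorem expect_phi_mul_eq_zero (B : ChainBN n) (k : Fin n) {H : (Fin n → Bool) → ℝ}
    (hH : DependsOn H {j | (j : ℕ) < k}) :
    B.expect (fun x => B.phi k x * H x) = 0 := by
  have hphiH : DependsOn (fun x => B.phi k x * H x) {j | (j : ℕ) < k + 1} :=
    (B.dependsOn_phi k).mul (hH.mono fun j hj => by simp at hj ⊢; omega)
  have hQ : ∀ x, B.prefixProb k (flipAt k x) * H (flipAt k x) = B.prefixProb k x * H x :=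
    fun x => by
      rw [(B.dependsOn_prefixProb k).apply_flipAt (by simp), hH.apply_flipAt (by simp)]
  have hzero : ∑ x, B.prefixProb (k + 1) x * (B.phi k x * H x) = 0 := by
    have h2 := two_mul_sum_mul_of_flipAt_invariant k (fun x => B.factor k x * B.phi k x)
      (fun x => B.prefixProb k x * H x) hQ
    simp only [factor_mul_phi_add_flipAt, zero_mul, sum_const_zero, mul_eq_zero, two_ne_zero,
      false_or] at h2
    rw [← h2]
    exact sum_congr rfl fun x _ => by rw [B.prefixProb_succ k.isLt, Fin.eta]; ring
  rw [B.sum_prefixProb_mul_of_dependsOn k.isLt hphiH] at hzero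
  exact (mul_eq_zero.mp hzero).resolve_left (by positivity)

end ChainBN

theorem dependsOn_conj {n : ℕ} {T0 T1 : Finset (Fin n)} {k : ℕ}
    (hT : ∀ t ∈ T0 ∪ T1, (t : ℕ) < k) : DependsOn (conj T0 T1) {j | (j : ℕ) < k} := by
  intro x y h
  unfold conj
  rw [prod_congr rfl fun t ht => congrArg b2r (h t (hT t (mem_union_right T0 ht))),
    prod_congr rfl fun t ht => congrArg (1 - b2r ·) (h t (hT t (mem_union_left T1 ht)))]

theorem chain_coeff_zero_beyond_max_general {n : ℕ} (B : ChainBN n)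
    (T0 T1 : Finset (Fin n)) (S : Finset (Fin n)) (hmax : ∃ s ∈ S, ∀ t ∈ T0 ∪ T1, t < s) :
    B.coeff (conj T0 T1) S = 0 := by
  obtain ⟨s, hs, hsT⟩ := hmax
  set m := S.max' ⟨s, hs⟩
  have hmS : m ∈ S := S.max'_mem _
  have hTm : ∀ t ∈ T0 ∪ T1, (t : ℕ) < m := fun t ht =>
    lt_of_lt_of_le (hsT t ht) (S.le_max' s hs)
  have hSm : ∀ i ∈ S.erase m, (i : ℕ) < m := fun i hi =>
    lt_of_le_of_ne (S.le_max' i (mem_of_mem_erase hi)) (Fin.val_ne_of_ne (ne_of_mem_erase hi))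
  have hsplit : ∀ x, conj T0 T1 x * B.phiS S x =
      B.phi m x * (conj T0 T1 x * B.phiS (S.erase m) x) := fun x => by simp only [ChainBN.phiS]; rw [← mul_prod_erase S _ hmS]; ring
  rw [ChainBN.coeff, funext hsplit]
  exact B.expect_phi_mul_eq_zero m ((dependsOn_conj hTm).mul (B.dependsOn_phiS hSm))

/-- For a chain BN and a conjunction with literal set `T = T0 ∪ T1`,
any subset `S` with `max S > max T` has Fourier coefficient `f̂_S = 0`. -/
theorem chain_coeff_zero_beyond_max {n : ℕ} (B : ChainBN n)
    (T0 T1 : Finset (Fin n)) (hdisj : Disjoint T0 T1)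
    (S : Finset (Fin n)) (hmax : ∃ s ∈ S, ∀ t ∈ T0 ∪ T1, t < s) :
    B.coeff (conj T0 T1) S = 0 :=
  chain_coeff_zero_beyond_max_general B T0 T1 S hmax
end
end
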